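/- arXiv:1811.09269 — 5 statements merged into one kernel-verified Lean document; each statement's English description precedes it below -/
import Mathlib

section
/- Let H : ℝⁿ × ℝᵖ → ℝⁿ, fix (z,p) with approximation function x̂ : ℝᵖ → ℝⁿ satisfying x̂(p) = z, and fix s. Suppose there exist a matrix C, slope representations H(x,s) = H(x̂(s),s) + S_x(x − x̂(s)) with S_x = H'_x(x̂(s),s) + T(x − x̂(s)) for a bilinear second-order slope T, and componentwise bounds 𝔟 ≥ |C H(x̂(s),s)|, 𝔅₀ ≥ |C H'_x(x̂(s),s) − I|, 𝔅 ≥ |C T| (entrywise, as a 3-tensor). If x is a zero of H(·, s), then the deviation d := |x − x̂(s)| (componentwise absolute value) satisfies 0 ≤ d ≤ 𝔟 + (𝔅₀ + 𝔅 d) d componentwise, where 𝔅 d denotes the tensor-vector contraction. -/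
/-- Proposition 4.1: deviation estimate. If `x` is a zero of `F = H(·,s)` admitting the
slope decomposition `F x = F x̂ + (J + T(x - x̂)) (x - x̂)`, and `b, B0, B` bound
`|C F(x̂)|`, `|C J - I|`, `|C T|` componentwise, then the deviation `d = |x - x̂|`
satisfies `0 ≤ d ≤ b + (B0 + B d) d` componentwise. -/
theorem deviation_estimate {n : ℕ}
    (F : (Fin n → ℝ) → (Fin n → ℝ))   -- H(·, s)
    (xhat x : Fin n → ℝ)              -- approximation x̂(s) and a true zero
    (C J : Matrix (Fin n) (Fin n) ℝ)  -- preconditioner and Jacobian H'_x(x̂(s), s)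
    (T : Fin n → Fin n → Fin n → ℝ)   -- bilinear second order slope
    (b : Fin n → ℝ) (B0 : Matrix (Fin n) (Fin n) ℝ) (B : Fin n → Fin n → Fin n → ℝ)
    -- slope decomposition at x
    (hslope : ∀ i, F x i = F xhat i +
      ∑ j, (J i j + ∑ k, T i j k * (x k - xhat k)) * (x j - xhat j))
    (hb : ∀ i, |(C.mulVec (F xhat)) i| ≤ b i)
    (hB0 : ∀ i j, |(C * J - 1) i j| ≤ B0 i j)
    (hB : ∀ i j k, |∑ l, C i l * T l j k| ≤ B i j k)
    (hzero : F x = 0) :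
    ∀ i, 0 ≤ |x i - xhat i| ∧
      |x i - xhat i| ≤ b i +
        ∑ j, (B0 i j + ∑ k, B i j k * |x k - xhat k|) * |x j - xhat j| := by
  intro i
  refine ⟨abs_nonneg _, ?_⟩
  let d : Fin n → ℝ := fun j => x j - xhat j
  have habs : ∀ j, |x j - xhat j| = |d j| := fun j => rfl
  simp only [habs]
  have key : d i = -((C.mulVec (F xhat)) i +
      ∑ j, ((C * J - 1) i j + ∑ k, (∑ l, C i l * T l j k) * d k) * d j) := by
    have h0 : ∑ l, C i l * F x l = 0 := by
      simp [hzero]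
    have hexp : ∑ l, C i l * F x l =
        (C.mulVec (F xhat)) i +
        ∑ j, ((C * J - 1) i j + ∑ k, (∑ l, C i l * T l j k) * d k) * d j + d i := by
      simp only [hslope, Matrix.mulVec, dotProduct, Matrix.sub_apply, Matrix.mul_apply,
        Matrix.one_apply, mul_add, add_mul, sub_mul, Finset.mul_sum, Finset.sum_mul,
        Finset.sum_add_distrib, Finset.sum_sub_distrib, ite_mul, one_mul, zero_mul]
      simp only [Finset.sum_ite_eq, Finset.mem_univ, if_true, dotProduct]
      have s1 : ∑ l, ∑ j, C i l * (J l j * (x j - xhat j))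
          = ∑ j, ∑ l, C i l * J l j * d j := by
        rw [Finset.sum_comm]
        exact Finset.sum_congr rfl fun j _ => Finset.sum_congr rfl fun l _ =>
          (mul_assoc _ _ _).symm
      have s2 : ∑ l, ∑ j, ∑ k, C i l * (T l j k * (x k - xhat k) * (x j - xhat j))
          = ∑ j, ∑ k, ∑ l, C i l * T l j k * d k * d j := by
        rw [Finset.sum_comm]
        refine Finset.sum_congr rfl fun j _ => ?_
        rw [Finset.sum_comm]
        exact Finset.sum_congr rfl fun k _ => Finset.sum_congr rfl fun l _ => by ring
      rw [s1, s2]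
      ring
    rw [hexp] at h0
    linarith
  calc |d i| = |(C.mulVec (F xhat)) i +
      ∑ j, ((C * J - 1) i j + ∑ k, (∑ l, C i l * T l j k) * d k) * d j| := by
        rw [key, abs_neg]
    _ ≤ |(C.mulVec (F xhat)) i| +
        |∑ j, ((C * J - 1) i j + ∑ k, (∑ l, C i l * T l j k) * d k) * d j| := abs_add_le _ _
    _ ≤ b i + ∑ j, (B0 i j + ∑ k, B i j k * |d k|) * |d j| := by
        refine add_le_add (hb i) ?_
        refine le_trans (Finset.abs_sum_le_sum_abs _ _) ?_
        refine Finset.sum_le_sum fun j _ => ?_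
        rw [abs_mul]
        refine mul_le_mul_of_nonneg_right ?_ (abs_nonneg _)
        refine le_trans (abs_add_le _ _) (add_le_add (hB0 i j) ?_)
        refine le_trans (Finset.abs_sum_le_sum_abs _ _) ?_
        refine Finset.sum_le_sum fun k _ => ?_
        rw [abs_mul]
        exact mul_le_mul_of_nonneg_right (hB i j k) (abs_nonneg _)
end

section
/- Under the hypotheses of Theorem 4.2, the map K_s(x) := x − C H(x,s) satisfies |K_s(x) − x̂(s)| ≤ 𝔟 + (𝔅₀ + 𝔅 u) u componentwise for all x with |x − x̂(s)| ≤ u; in particular K_s maps M_u(s) into itself whenever 𝔟 + (𝔅₀ + 𝔅 u) u ≤ u. -/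
/-- Key estimate in the proof of Theorem 4.2: the Krawczyk-type map
`K(x) = x - C F(x)` satisfies `|K(x) - x̂| ≤ b + (B0 + B u) u` componentwise on
`M_u(s)`; in particular it maps `M_u(s)` into itself when `b + (B0 + B u) u ≤ u`. -/
theorem krawczyk_map_estimate {n : ℕ}
    (F : (Fin n → ℝ) → (Fin n → ℝ))   -- H(·, s)
    (xhat : Fin n → ℝ)
    (C J : Matrix (Fin n) (Fin n) ℝ)
    (b : Fin n → ℝ) (B0 : Matrix (Fin n) (Fin n) ℝ) (B : Fin n → Fin n → Fin n → ℝ)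
    (u : Fin n → ℝ) (hu : ∀ i, 0 ≤ u i)
    (hslope : ∀ x : Fin n → ℝ, (∀ i, |x i - xhat i| ≤ u i) →
      ∃ T : Fin n → Fin n → Fin n → ℝ,
        (∀ i, F x i = F xhat i +
          ∑ j, (J i j + ∑ k, T i j k * (x k - xhat k)) * (x j - xhat j)) ∧
        (∀ i j k, |∑ l, C i l * T l j k| ≤ B i j k))
    (hb : ∀ i, |(C.mulVec (F xhat)) i| ≤ b i)
    (hB0 : ∀ i j, |(C * J - 1) i j| ≤ B0 i j) :
    (∀ x : Fin n → ℝ, (∀ i, |x i - xhat i| ≤ u i) →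
      ∀ i, |(x - C.mulVec (F x)) i - xhat i| ≤
        b i + ∑ j, (B0 i j + ∑ k, B i j k * u k) * u j) ∧
    ((∀ i, b i + ∑ j, (B0 i j + ∑ k, B i j k * u k) * u j ≤ u i) →
      ∀ x : Fin n → ℝ, (∀ i, |x i - xhat i| ≤ u i) →
        ∀ i, |(x - C.mulVec (F x)) i - xhat i| ≤ u i) := by
  have main : ∀ x : Fin n → ℝ, (∀ i, |x i - xhat i| ≤ u i) →
      ∀ i, |(x - C.mulVec (F x)) i - xhat i| ≤
        b i + ∑ j, (B0 i j + ∑ k, B i j k * u k) * u j := by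
    intro x hx i
    obtain ⟨T, hT1, hT2⟩ := hslope x hx
    set d : Fin n → ℝ := fun j => x j - xhat j with hd
    have hdu : ∀ j, |d j| ≤ u j := hx
    have h1 : (C.mulVec (F x)) i
        = (C.mulVec (F xhat)) i + ∑ j, (∑ l, C i l * J l j) * d j
          + ∑ j, (∑ k, (∑ l, C i l * T l j k) * d k) * d j := by
      simp only [Matrix.mulVec, dotProduct]
      calc ∑ l, C i l * F x l
          = ∑ l, (C i l * F xhat l + (∑ j, (C i l * J l j) * d j
              + ∑ j, ∑ k, ((C i l * T l j k) * d k) * d j)) := by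
            refine Finset.sum_congr rfl fun l _ => ?_
            rw [hT1 l, mul_add, Finset.mul_sum]
            congr 1
            rw [← Finset.sum_add_distrib]
            refine Finset.sum_congr rfl fun j _ => ?_
            rw [add_mul, mul_add]
            congr 1
            · show C i l * (J l j * d j) = C i l * J l j * d j
              ring
            · show C i l * ((∑ k, T l j k * d k) * d j) = _
              rw [Finset.sum_mul, Finset.mul_sum]
              refine Finset.sum_congr rfl fun k _ => ?_
              ring
        _ = ∑ l, C i l * F xhat l + (∑ l, ∑ j, (C i l * J l j) * d j
              + ∑ l, ∑ j, ∑ k, ((C i l * T l j k) * d k) * d j) := by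
            rw [Finset.sum_add_distrib, Finset.sum_add_distrib]
        _ = ∑ l, C i l * F xhat l + ∑ j, (∑ l, C i l * J l j) * d j
              + ∑ j, (∑ k, (∑ l, C i l * T l j k) * d k) * d j := by
            rw [← add_assoc]
            congr 1
            · congr 1
              rw [Finset.sum_comm]
              refine Finset.sum_congr rfl fun j _ => ?_
              rw [Finset.sum_mul]
            · rw [Finset.sum_comm]
              refine Finset.sum_congr rfl fun j _ => ?_
              rw [Finset.sum_comm]
              rw [Finset.sum_mul]
              refine Finset.sum_congr rfl fun k _ => ?_
              rw [Finset.sum_mul, Finset.sum_mul]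
    have hone : ∑ j, (1 : Matrix (Fin n) (Fin n) ℝ) i j * d j = d i := by
      simp [Matrix.one_apply]
    have key : (x - C.mulVec (F x)) i - xhat i
        = -((C.mulVec (F xhat)) i) + (- ∑ j, (C * J - 1) i j * d j)
          + (- ∑ j, (∑ k, (∑ l, C i l * T l j k) * d k) * d j) := by
      have hcj : ∑ j, (C * J - 1) i j * d j
          = ∑ j, (∑ l, C i l * J l j) * d j - d i := by
        rw [← hone, ← Finset.sum_sub_distrib]
        refine Finset.sum_congr rfl fun j _ => ?_
        rw [Matrix.sub_apply, Matrix.mul_apply, sub_mul]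
      have : (x - C.mulVec (F x)) i - xhat i = d i - (C.mulVec (F x)) i := by
        simp [hd]; ring
      rw [this, h1, hcj]; ring
    rw [key]
    have step1 : |(-((C.mulVec (F xhat)) i) + (- ∑ j, (C * J - 1) i j * d j)
          + (- ∑ j, (∑ k, (∑ l, C i l * T l j k) * d k) * d j))|
        ≤ |(C.mulVec (F xhat)) i| + |∑ j, (C * J - 1) i j * d j|
          + |∑ j, (∑ k, (∑ l, C i l * T l j k) * d k) * d j| := by
      calc _ ≤ |(-((C.mulVec (F xhat)) i) + (- ∑ j, (C * J - 1) i j * d j))|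
            + |(- ∑ j, (∑ k, (∑ l, C i l * T l j k) * d k) * d j)| := abs_add_le _ _
        _ ≤ _ := by
            rw [abs_neg]
            gcongr
            calc _ ≤ |(-((C.mulVec (F xhat)) i))| + |(- ∑ j, (C * J - 1) i j * d j)| :=
                abs_add_le _ _
              _ = _ := by rw [abs_neg, abs_neg]
    refine step1.trans ?_
    have t2 : |∑ j, (C * J - 1) i j * d j| ≤ ∑ j, B0 i j * u j := by
      refine (Finset.abs_sum_le_sum_abs _ _).trans ?_
      refine Finset.sum_le_sum fun j _ => ?_
      rw [abs_mul]
      exact mul_le_mul (hB0 i j) (hdu j) (abs_nonneg _) ((abs_nonneg _).trans (hB0 i j))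
    have t3 : |∑ j, (∑ k, (∑ l, C i l * T l j k) * d k) * d j|
        ≤ ∑ j, (∑ k, B i j k * u k) * u j := by
      refine (Finset.abs_sum_le_sum_abs _ _).trans ?_
      refine Finset.sum_le_sum fun j _ => ?_
      rw [abs_mul]
      have hinner : |∑ k, (∑ l, C i l * T l j k) * d k| ≤ ∑ k, B i j k * u k := by
        refine (Finset.abs_sum_le_sum_abs _ _).trans ?_
        refine Finset.sum_le_sum fun k _ => ?_
        rw [abs_mul]
        exact mul_le_mul (hT2 i j k) (hdu k) (abs_nonneg _)
          ((abs_nonneg _).trans (hT2 i j k))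
      refine mul_le_mul hinner (hdu j) (abs_nonneg _) ?_
      refine Finset.sum_nonneg fun k _ => mul_nonneg ?_ (hu k)
      exact (abs_nonneg _).trans (hT2 i j k)
    have := add_le_add (add_le_add (hb i) t2) t3
    refine this.trans ?_
    rw [add_assoc, ← Finset.sum_add_distrib]
    gcongr with j hj
    rw [add_mul]
  refine ⟨main, fun hfix x hx i => (main x hx i).trans (hfix i)⟩
end

section
/- Let v ∈ ℝⁿ with v > 0, define 𝔴 := (I − 𝔅₀)v and 𝔞 := v^T 𝔅 v (componentwise, 𝔞_j = Σ_{i,k} v_i 𝔅_{jik} v_k ≥ 0), and suppose D_j := 𝔴_j² − 4 𝔞_j 𝔟_j > 0 for all j. Define λ_j^e := (𝔴_j + √D_j)/(2𝔞_j), λ_j^i := 𝔟_j/(𝔞_j λ_j^e), λ^e := min_j λ_j^e, λ^i := max_j λ_j^i. If λ^e > λ^i, then for every λ ∈ [λ^i, λ^e], the vector u := λ v satisfies 𝔟 + (𝔅₀ + 𝔅 u) u ≤ u componentwise. -/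
/-- If `A > 0` and `rm, rp` are the roots of `A x² - W x + bb` (given via sum/product),
then the quadratic is nonpositive between the roots. -/
lemma quad_key (A W bb lam rm rp : ℝ) (hA : 0 < A)
    (hsum : A * (rm + rp) = W) (hprod : A * (rm * rp) = bb)
    (h1 : rm ≤ lam) (h2 : lam ≤ rp) : A * lam ^ 2 - W * lam + bb ≤ 0 := by
  have h := mul_nonneg (mul_nonneg hA.le (sub_nonneg.2 h1)) (sub_nonneg.2 h2)
  have e1 : A * (rm + rp) * lam = W * lam := by rw [hsum]
  nlinarith [h, e1, hprod]

/-- The per-component quadratic inequality. -/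
lemma per_j (A W bb lam : ℝ) (hA : 0 < A) (hbb : 0 ≤ bb)
    (hD : 0 < W ^ 2 - 4 * A * bb)
    (hs : W + Real.sqrt (W ^ 2 - 4 * A * bb) ≠ 0)
    (h1 : bb / (A * ((W + Real.sqrt (W ^ 2 - 4 * A * bb)) / (2 * A))) ≤ lam)
    (h2 : lam ≤ (W + Real.sqrt (W ^ 2 - 4 * A * bb)) / (2 * A)) :
    A * lam ^ 2 - W * lam + bb ≤ 0 := by
  set q : ℝ := Real.sqrt (W ^ 2 - 4 * A * bb) with hq_def
  have hq2 : q ^ 2 = W ^ 2 - 4 * A * bb := Real.sq_sqrt hD.le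
  set s : ℝ := W + q with hs_def
  have hAne : A ≠ 0 := hA.ne'
  have hs2 : s ^ 2 = 2 * W * s - 4 * A * bb := by
    have : s ^ 2 = W ^ 2 + 2 * W * q + q ^ 2 := by rw [hs_def]; ring
    rw [this, hq2]; rw [hs_def]; ring
  set rp : ℝ := s / (2 * A) with hrp_def
  set rm : ℝ := 2 * bb / s with hrm_def
  have hrm : rm * s = 2 * bb := by rw [hrm_def]; field_simp
  have hrp : rp * (2 * A) = s := by rw [hrp_def]; field_simp
  have h2s : (2 : ℝ) * s ≠ 0 := by
    intro h; exact hs (by linarith [mul_eq_zero.mp h |>.resolve_left two_ne_zero])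
  have hsum : A * (rm + rp) = W := by
    apply mul_right_cancel₀ h2s
    calc A * (rm + rp) * (2 * s) = 2 * A * (rm * s) + (rp * (2 * A)) * s := by ring
      _ = 2 * A * (2 * bb) + s * s := by rw [hrm, hrp]
      _ = 4 * A * bb + s ^ 2 := by ring
      _ = 2 * W * s := by rw [hs2]; ring
      _ = W * (2 * s) := by ring
  have hprod : A * (rm * rp) = bb := by
    apply mul_right_cancel₀ h2s
    calc A * (rm * rp) * (2 * s) = (rm * s) * (rp * (2 * A)) := by ring
      _ = 2 * bb * s := by rw [hrm, hrp]
      _ = bb * (2 * s) := by ring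
  have hA2 : A * ((W + q) / (2 * A)) = s / 2 := by
    rw [hs_def]; field_simp
  rw [hA2] at h1
  have hdd : bb / (s / 2) = rm := by
    rw [hrm_def, div_div_eq_mul_div]; ring_nf
  rw [hdd] at h1
  exact quad_key A W bb lam rm rp hA hsum hprod h1 h2

/-- Core computation of Theorem 4.3: with `𝔴 = (I - B0) v`, `𝔞 = vᵀ B v`, and positive
discriminants `D_j`, any `λ ∈ [λⁱ, λᵉ]` gives a vector `u = λ v` satisfying
`b + (B0 + B u) u ≤ u` componentwise. -/
theorem lambda_interval_gives_u {n : ℕ} [Nonempty (Fin n)]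
    (v b : Fin n → ℝ) (B0 : Matrix (Fin n) (Fin n) ℝ) (B : Fin n → Fin n → Fin n → ℝ)
    (hv : ∀ i, 0 < v i) (hb : ∀ i, 0 ≤ b i)
    (hB0 : ∀ i j, 0 ≤ B0 i j) (hB : ∀ i j k, 0 ≤ B i j k) :
    let w : Fin n → ℝ := fun j => v j - (B0.mulVec v) j
    let a : Fin n → ℝ := fun j => ∑ i, ∑ k, v i * B j i k * v k
    let D : Fin n → ℝ := fun j => (w j) ^ 2 - 4 * a j * b j
    let lamEj : Fin n → ℝ := fun j => (w j + Real.sqrt (D j)) / (2 * a j)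
    let lamIj : Fin n → ℝ := fun j => b j / (a j * lamEj j)
    let lamE : ℝ := Finset.univ.inf' Finset.univ_nonempty lamEj
    let lamI : ℝ := Finset.univ.sup' Finset.univ_nonempty lamIj
    (∀ j, 0 < D j) → lamI < lamE →
    ∀ lam ∈ Set.Icc lamI lamE, ∀ j : Fin n,
      b j + ∑ i, (B0 j i + ∑ k, B j i k * (lam * v k)) * (lam * v i) ≤ lam * v j := by
  intro w a D lamEj lamIj lamE lamI hD hlt lam hlam j
  have ha0 : ∀ j, 0 ≤ a j := by
    intro j
    apply Finset.sum_nonneg; intro i _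
    apply Finset.sum_nonneg; intro k _
    exact mul_nonneg (mul_nonneg (hv i).le (hB j i k)) (hv k).le
  -- degenerate cases are excluded by lamI < lamE
  have key : ∀ j, 0 < a j ∧ w j + Real.sqrt (D j) ≠ 0 := by
    intro j
    by_contra hcon
    push_neg at hcon
    have hz : lamEj j = 0 ∧ lamIj j = 0 := by
      rcases eq_or_lt_of_le (ha0 j) with h | h
      · constructor
        · simp [lamEj, ← h]
        · simp [lamIj, ← h]
      · have hs := hcon h
        constructor
        · simp [lamEj, hs]
        · simp [lamIj, lamEj, hs]
    have h1 : lamE ≤ 0 := by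
      have := Finset.inf'_le lamEj (Finset.mem_univ j)
      rw [hz.1] at this; exact this
    have h2 : 0 ≤ lamI := by
      have := Finset.le_sup' lamIj (Finset.mem_univ j)
      rw [hz.2] at this; exact this
    linarith
  obtain ⟨haj, hsj⟩ := key j
  have hDdef : D j = w j ^ 2 - 4 * a j * b j := rfl
  have h1 : lamIj j ≤ lam :=
    le_trans (Finset.le_sup' lamIj (Finset.mem_univ j)) hlam.1
  have h2 : lam ≤ lamEj j :=
    le_trans hlam.2 (Finset.inf'_le lamEj (Finset.mem_univ j))
  rw [hDdef] at hsj
  have hquad : a j * lam ^ 2 - w j * lam + b j ≤ 0 := by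
    refine per_j (a j) (w j) (b j) lam haj (hb j) ?_ hsj ?_ ?_
    · rw [← hDdef]; exact hD j
    · exact h1
    · exact h2
  -- expand the sum
  have inner : ∀ i, (∑ k, B j i k * (lam * v k)) * (lam * v i)
      = lam ^ 2 * ∑ k, v i * B j i k * v k := by
    intro i
    rw [Finset.sum_mul, Finset.mul_sum]
    exact Finset.sum_congr rfl fun k _ => by ring
  have hexp : ∑ i, (B0 j i + ∑ k, B j i k * (lam * v k)) * (lam * v i)
      = lam * (∑ i, B0 j i * v i) + lam ^ 2 * a j := by
    calc ∑ i, (B0 j i + ∑ k, B j i k * (lam * v k)) * (lam * v i)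
        = ∑ i, (lam * (B0 j i * v i) + lam ^ 2 * ∑ k, v i * B j i k * v k) :=
          Finset.sum_congr rfl fun i _ => by rw [add_mul, inner i]; ring
      _ = lam * (∑ i, B0 j i * v i) + lam ^ 2 * a j := by
          rw [Finset.sum_add_distrib, Finset.mul_sum, Finset.mul_sum]
  rw [hexp]
  have hw : w j = v j - ∑ i, B0 j i * v i := rfl
  have hv2 : lam * v j = lam * w j + lam * ∑ i, B0 j i * v i := by rw [hw]; ring
  linarith [hquad, hv2]
end

section
/- Under the hypotheses of Theorem 4.3 (in particular λ_s^e > λ_s^i and the inclusion region R^i_s := [x̂ − λ_s^i v, x̂ + λ_s^i v] ⊆ [x]), every zero x of H(·,s) lying in the interior of the exclusion region R^e_s := [x̂ − λ_s^e v, x̂ + λ_s^e v] ∩ [x] actually lies in R^i_s. -/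
/-- Auxiliary quadratic fact: if `r` is a positive root of `a X^2 - w X + b`,
`a r r' = b`, and `r' < lam < r`, then the quadratic is negative at `lam`. -/
lemma quad_neg_aux {a w b r r' lam : ℝ} (ha : 0 < a)
    (hroot : a * r ^ 2 - w * r + b = 0) (hb : a * r * r' = b)
    (hrpos : 0 < r) (h1 : lam < r) (h2 : r' < lam) :
    a * lam ^ 2 - w * lam + b < 0 := by
  have hw : w = a * (r + r') := by
    have h5 : r * (a * r - w + a * r') = 0 := by nlinarith
    rcases mul_eq_zero.mp h5 with h | h
    · exact absurd h hrpos.ne'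
    · nlinarith
  have hkey : a * lam ^ 2 - w * lam + b = -(a * ((r - lam) * (lam - r'))) := by
    rw [hw, ← hb]; ring
  rw [hkey]
  have : 0 < a * ((r - lam) * (lam - r')) :=
    mul_pos ha (mul_pos (by linarith) (by linarith))
  linarith

/-- Theorem 4.3, uniqueness part: under the inclusion/exclusion hypotheses, every zero of
`H(·,s)` in the interior of the exclusion region `Rᵉ = [x̂ - λᵉ v, x̂ + λᵉ v] ∩ [x]`
actually lies in the inclusion region `Rⁱ = [x̂ - λⁱ v, x̂ + λⁱ v]`. -/
theorem zeros_in_exclusion_lie_in_inclusion {n : ℕ} [Nonempty (Fin n)]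
    (F : (Fin n → ℝ) → (Fin n → ℝ))   -- H(·, s)
    (lo hi xhat : Fin n → ℝ)          -- box [x] and center x̂ = x̂(s)
    (hxhat : ∀ i, lo i ≤ xhat i ∧ xhat i ≤ hi i)
    (C J : Matrix (Fin n) (Fin n) ℝ)
    (v b : Fin n → ℝ) (B0 : Matrix (Fin n) (Fin n) ℝ) (B : Fin n → Fin n → Fin n → ℝ)
    (hv : ∀ i, 0 < v i) (hbpos : ∀ i, 0 ≤ b i)
    -- slope decomposition valid on the whole box, second order slopes bounded by B
    (hslope : ∀ x : Fin n → ℝ, (∀ i, lo i ≤ x i ∧ x i ≤ hi i) →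
      ∃ T : Fin n → Fin n → Fin n → ℝ,
        (∀ i, F x i = F xhat i +
          ∑ j, (J i j + ∑ k, T i j k * (x k - xhat k)) * (x j - xhat j)) ∧
        (∀ i j k, |∑ l, C i l * T l j k| ≤ B i j k))
    (hb : ∀ i, |(C.mulVec (F xhat)) i| ≤ b i)
    (hB0 : ∀ i j, |(C * J - 1) i j| ≤ B0 i j)
    (hB0pos : ∀ i j, 0 ≤ B0 i j) (hBpos : ∀ i j k, 0 ≤ B i j k) :
    let w : Fin n → ℝ := fun j => v j - (B0.mulVec v) j
    let a : Fin n → ℝ := fun j => ∑ i, ∑ k, v i * B j i k * v k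
    let D : Fin n → ℝ := fun j => (w j) ^ 2 - 4 * a j * b j
    let lamEj : Fin n → ℝ := fun j => (w j + Real.sqrt (D j)) / (2 * a j)
    let lamIj : Fin n → ℝ := fun j => b j / (a j * lamEj j)
    let lamE : ℝ := Finset.univ.inf' Finset.univ_nonempty lamEj
    let lamI : ℝ := Finset.univ.sup' Finset.univ_nonempty lamIj
    (∀ j, 0 < D j) → lamI < lamE →
    -- inclusion region contained in the box
    (∀ i, lo i ≤ xhat i - lamI * v i ∧ xhat i + lamI * v i ≤ hi i) →
    -- any zero in the interior of the exclusion region lies in the inclusion region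
    ∀ x : Fin n → ℝ, F x = 0 →
      (∀ i, lo i < x i ∧ x i < hi i) →
      (∀ i, |x i - xhat i| < lamE * v i) →
      ∀ i, |x i - xhat i| ≤ lamI * v i := by
  intro w a D lamEj lamIj lamE lamI hD hIE hincl x hFx hxbox hxlt
  -- distance vector
  set d : Fin n → ℝ := fun i => x i - xhat i with hd
  -- minimal lambda with |d| ≤ lam * v
  set lam : ℝ := Finset.univ.sup' Finset.univ_nonempty (fun i => |d i| / v i) with hlamdef
  have hlam_le : ∀ i, |d i| ≤ lam * v i := by
    intro i
    have h := Finset.le_sup' (fun i => |d i| / v i) (Finset.mem_univ i)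
    rw [← hlamdef] at h
    rw [← div_le_iff₀ (hv i)]
    exact h
  obtain ⟨j0, -, hj0⟩ := Finset.exists_mem_eq_sup' Finset.univ_nonempty
      (fun i => |d i| / v i)
  have hj0l : lam = |d j0| / v j0 := hlamdef.trans hj0
  have hj0' : |d j0| = lam * v j0 := by
    rw [hj0l, div_mul_cancel₀ _ (hv j0).ne']
  have hlam_nonneg : 0 ≤ lam := by
    rw [hj0l]; exact div_nonneg (abs_nonneg _) (hv j0).le
  have hlamE : lam < lamE := by
    rw [hj0l, div_lt_iff₀ (hv j0)]
    exact hxlt j0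
  -- nonnegativity of a
  have ha_nonneg : ∀ j, 0 ≤ a j := by
    intro j
    apply Finset.sum_nonneg; intro i _
    apply Finset.sum_nonneg; intro k _
    exact mul_nonneg (mul_nonneg (hv i).le (hBpos j i k)) (hv k).le
  -- positivity of a and w (otherwise lamEj j ≤ 0, contradicting 0 ≤ lam < lamE)
  have haw : ∀ j, 0 < a j ∧ 0 < w j := by
    intro j
    have hEj : lam < lamEj j := lt_of_lt_of_le hlamE (Finset.inf'_le _ (Finset.mem_univ j))
    by_contra hc
    push_neg at hc
    have hEneg : lamEj j ≤ 0 := by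
      rcases eq_or_lt_of_le (ha_nonneg j) with h0 | hpos
      · show (w j + Real.sqrt (D j)) / (2 * a j) ≤ 0
        rw [← h0]
        simp
      · have hw : w j ≤ 0 := hc hpos
        have hsq : Real.sqrt (D j) ≤ -(w j) := by
          have h1 : D j ≤ (-(w j))^2 := by
            have hab : 0 ≤ 4 * a j * b j :=
              mul_nonneg (mul_nonneg (by norm_num) (ha_nonneg j)) (hbpos j)
            have hDd : D j = w j ^ 2 - 4 * a j * b j := rfl
            nlinarith
          calc Real.sqrt (D j) ≤ Real.sqrt ((-(w j))^2) :=
                Real.sqrt_le_sqrt h1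
          _ = -(w j) := by
                rw [Real.sqrt_sq (by linarith)]
        show (w j + Real.sqrt (D j)) / (2 * a j) ≤ 0
        apply div_nonpos_of_nonpos_of_nonneg
        · linarith
        · linarith
    linarith
  -- the key contraction estimate
  have hxbox' : ∀ i, lo i ≤ x i ∧ x i ≤ hi i :=
    fun i => ⟨(hxbox i).1.le, (hxbox i).2.le⟩
  obtain ⟨T, hT1, hT2⟩ := hslope x hxbox'
  have h0 : ∀ l, F xhat l + ∑ j, (J l j + ∑ k, T l j k * d k) * d j = 0 := by
    intro l
    have := hT1 l
    rw [hFx] at this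
    simpa [hd] using this.symm
  have main : ∀ i, (C.mulVec (F xhat)) i + (∑ j, (C * J) i j * d j)
      + (∑ j, (∑ k, (∑ l, C i l * T l j k) * d k) * d j) = 0 := by
    intro i
    have hz : (∑ l, C i l * (F xhat l + ∑ j, (J l j + ∑ k, T l j k * d k) * d j)) = 0 := by
      simp [h0]
    calc (C.mulVec (F xhat)) i + (∑ j, (C * J) i j * d j)
        + (∑ j, (∑ k, (∑ l, C i l * T l j k) * d k) * d j)
        = (∑ l, C i l * F xhat l) + (∑ j, (∑ l, C i l * J l j) * d j)
          + (∑ j, (∑ k, (∑ l, C i l * T l j k) * d k) * d j) := by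
          simp [Matrix.mulVec, dotProduct, Matrix.mul_apply]
    _ = (∑ l, C i l * F xhat l) + (∑ l, ∑ j, C i l * J l j * d j)
          + (∑ l, ∑ j, (∑ k, C i l * T l j k * d k) * d j) := by
          congr 1
          · congr 1
            rw [Finset.sum_comm]
            apply Finset.sum_congr rfl; intro j _
            rw [Finset.sum_mul]
          · rw [Finset.sum_comm]
            apply Finset.sum_congr rfl; intro j _
            rw [← Finset.sum_mul]
            congr 1
            rw [Finset.sum_comm]
            apply Finset.sum_congr rfl; intro k _
            rw [Finset.sum_mul]
    _ = ∑ l, C i l * (F xhat l + ∑ j, (J l j + ∑ k, T l j k * d k) * d j) := by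
          rw [add_assoc, ← Finset.sum_add_distrib, ← Finset.sum_add_distrib]
          apply Finset.sum_congr rfl; intro l _
          rw [mul_add, Finset.mul_sum]
          congr 1
          rw [← Finset.sum_add_distrib]
          apply Finset.sum_congr rfl; intro j _
          have hk : (∑ k, C i l * T l j k * d k) = C i l * ∑ k, T l j k * d k := by
            rw [Finset.mul_sum]
            apply Finset.sum_congr rfl; intro k _
            ring
          rw [hk]
          ring
    _ = 0 := hz
  have heq : ∀ i, d i = -((C.mulVec (F xhat)) i + (∑ j, (C * J - 1) i j * d j)
      + (∑ j, (∑ k, (∑ l, C i l * T l j k) * d k) * d j)) := by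
    intro i
    have hone : (∑ j, (C * J - 1) i j * d j) = (∑ j, (C * J) i j * d j) - d i := by
      simp only [Matrix.sub_apply, Matrix.one_apply, sub_mul, Finset.sum_sub_distrib]
      congr 1
      simp [ite_mul]
    rw [hone]
    have := main i
    linarith
  have key : ∀ i, |d i| ≤ b i + lam * (B0.mulVec v) i + lam ^ 2 * a i := by
    intro i
    rw [heq i, abs_neg]
    have h1 : |(∑ j, (C * J - 1) i j * d j)| ≤ lam * (B0.mulVec v) i := by
      calc |(∑ j, (C * J - 1) i j * d j)| ≤ ∑ j, |(C * J - 1) i j * d j| :=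
            Finset.abs_sum_le_sum_abs _ _
      _ ≤ ∑ j, B0 i j * (lam * v j) := by
            apply Finset.sum_le_sum; intro j _
            rw [abs_mul]
            exact mul_le_mul (hB0 i j) (hlam_le j) (abs_nonneg _) (hB0pos i j)
      _ = lam * (B0.mulVec v) i := by
            rw [Matrix.mulVec, dotProduct, Finset.mul_sum]
            apply Finset.sum_congr rfl; intro j _
            ring
    have h2 : |(∑ j, (∑ k, (∑ l, C i l * T l j k) * d k) * d j)| ≤ lam ^ 2 * a i := by
      calc |(∑ j, (∑ k, (∑ l, C i l * T l j k) * d k) * d j)|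
          ≤ ∑ j, |(∑ k, (∑ l, C i l * T l j k) * d k) * d j| :=
            Finset.abs_sum_le_sum_abs _ _
      _ ≤ ∑ j, (∑ k, B i j k * (lam * v k)) * (lam * v j) := by
            apply Finset.sum_le_sum; intro j _
            rw [abs_mul]
            apply mul_le_mul _ (hlam_le j) (abs_nonneg _)
            · apply Finset.sum_nonneg; intro k _
              have := hBpos i j k
              have := hv k
              positivity
            calc |∑ k, (∑ l, C i l * T l j k) * d k|
                ≤ ∑ k, |(∑ l, C i l * T l j k) * d k| := Finset.abs_sum_le_sum_abs _ _
            _ ≤ ∑ k, B i j k * (lam * v k) := by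
                apply Finset.sum_le_sum; intro k _
                rw [abs_mul]
                exact mul_le_mul (hT2 i j k) (hlam_le k) (abs_nonneg _) (hBpos i j k)
      _ = lam ^ 2 * a i := by
            have ha_def : a i = ∑ j, ∑ k, v j * B i j k * v k := rfl
            rw [ha_def]
            simp only [Finset.mul_sum]
            apply Finset.sum_congr rfl; intro j _
            rw [Finset.sum_mul]
            apply Finset.sum_congr rfl; intro k _
            ring
    calc |(C.mulVec (F xhat)) i + (∑ j, (C * J - 1) i j * d j)
        + (∑ j, (∑ k, (∑ l, C i l * T l j k) * d k) * d j)|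
        ≤ |(C.mulVec (F xhat)) i| + |(∑ j, (C * J - 1) i j * d j)|
          + |(∑ j, (∑ k, (∑ l, C i l * T l j k) * d k) * d j)| := by
          exact (abs_add_le _ _).trans (by gcongr; exact abs_add_le _ _)
    _ ≤ b i + lam * (B0.mulVec v) i + lam ^ 2 * a i := by
          gcongr
          exact hb i
  -- main case analysis: either lam ≤ lamI or contradiction
  intro i
  rcases le_or_gt lam lamI with hcase | hcase
  · calc |d i| ≤ lam * v i := hlam_le i
    _ ≤ lamI * v i := mul_le_mul_of_nonneg_right hcase (hv i).le
  · exfalso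
    -- quadratic estimate at j0
    have hq : b j0 + lam * (B0.mulVec v) j0 + lam ^ 2 * a j0 < lam * v j0 := by
      obtain ⟨ha, hw⟩ := haw j0
      set r : ℝ := lamEj j0 with hrdef
      have hsqrt : Real.sqrt (D j0) ^ 2 = D j0 := Real.sq_sqrt (hD j0).le
      have hsqrtpos : 0 < Real.sqrt (D j0) := Real.sqrt_pos.mpr (hD j0)
      have hr2a : 2 * a j0 * r = w j0 + Real.sqrt (D j0) := by
        rw [hrdef]
        show 2 * a j0 * ((w j0 + Real.sqrt (D j0)) / (2 * a j0)) = _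
        field_simp
      have hrpos : 0 < r := by
        have : 0 < 2 * a j0 := by linarith
        nlinarith
      have hroot : a j0 * r ^ 2 - w j0 * r + b j0 = 0 := by
        have h4 : (2 * a j0 * r - w j0) ^ 2 = D j0 := by
          rw [hr2a]
          have : w j0 + Real.sqrt (D j0) - w j0 = Real.sqrt (D j0) := by ring
          rw [this, hsqrt]
        have hDd : D j0 = w j0 ^ 2 - 4 * a j0 * b j0 := rfl
        rw [hDd] at h4
        nlinarith
      have hr' : a j0 * r * lamIj j0 = b j0 := by
        have hIdef : lamIj j0 = b j0 / (a j0 * r) := rfl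
        rw [hIdef]
        field_simp
      have hlamr : lam < r := lt_of_lt_of_le hlamE (Finset.inf'_le _ (Finset.mem_univ j0))
      have hlamr' : lamIj j0 < lam :=
        lt_of_le_of_lt (Finset.le_sup' _ (Finset.mem_univ j0)) hcase
      have hquad : a j0 * lam ^ 2 - w j0 * lam + b j0 < 0 :=
        quad_neg_aux ha hroot hr' hrpos hlamr hlamr'
      have hwv : v j0 - (B0.mulVec v) j0 = w j0 := rfl
      have h7 : (v j0 - (B0.mulVec v) j0) * lam = w j0 * lam := by rw [hwv]
      linarith [hquad, h7]
    have := key j0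
    rw [hj0'] at this
    linarith
end

section
/- Let H(x,s) = (x₁² + x₂² − 26 + s², x₁x₂ − 13 + s). For every s ∈ (0.657, 1.343) there exists x ∈ ℝ² with H(x,s) = 0 and |x₁ − (3 − (s−1)/7)| ≤ 0.451 and |x₂ − (4 − (s−1)/7)| ≤ 0.451. -/
/-- Main conclusion of the worked example: for every parameter `s` in the feasible
interval `(0.657, 1.343)` the system `H(x,s) = 0` has a solution in the inclusion box
of radius `0.451` around the tangent approximation `x̂(s) = (3,4) - (1/7)(1,1)(s-1)`. -/
theorem example_feasible_parameter_interval :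
    ∀ s : ℝ, 0.657 < s → s < 1.343 →
      ∃ x₁ x₂ : ℝ,
        x₁ ^ 2 + x₂ ^ 2 - 26 + s ^ 2 = 0 ∧
        x₁ * x₂ - 13 + s = 0 ∧
        |x₁ - (3 - (s - 1) / 7)| ≤ 0.451 ∧
        |x₂ - (4 - (s - 1) / 7)| ≤ 0.451 := by
  intro s hs1 hs2
  set p := Real.sqrt (53 - (s + 1) ^ 2) with hp
  set q := Real.sqrt (1 - (s - 1) ^ 2) with hq
  have hpn : (0:ℝ) ≤ 53 - (s + 1) ^ 2 := by nlinarith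
  have hqn : (0:ℝ) ≤ 1 - (s - 1) ^ 2 := by nlinarith
  have hp2 : p ^ 2 = 53 - (s + 1) ^ 2 := Real.sq_sqrt hpn
  have hq2 : q ^ 2 = 1 - (s - 1) ^ 2 := Real.sq_sqrt hqn
  have hp0 : 0 ≤ p := Real.sqrt_nonneg _
  have hq0 : 0 ≤ q := Real.sqrt_nonneg _
  have hpu : p ≤ 7.1 := by nlinarith [sq_nonneg (p - 7.1)]
  have hpl : 6.89 ≤ p := by nlinarith [sq_nonneg (p - 6.89)]
  have hqu : q ≤ 1 := by nlinarith [sq_nonneg (q - 1)]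
  have hql : 0.93 ≤ q := by nlinarith [sq_nonneg (q - 0.93)]
  refine ⟨(p - q) / 2, (p + q) / 2, by nlinarith, by nlinarith, ?_, ?_⟩
  · rw [abs_le]; constructor <;> nlinarith
  · rw [abs_le]; constructor <;> nlinarith
end
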